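/- Let G_1, ..., G_n be finite groups of pairwise coprime orders and G their direct product. Then SpecR(G) = {r_1 · ... · r_n : r_i ∈ SpecR(G_i)}. -/

import Mathlib

/-- The Reidemeister number of an endomorphism `φ`: the number of
`φ`-twisted conjugacy classes, where `x` and `y` are `φ`-conjugate iff
`x = z * y * (φ z)⁻¹` for some `z`. -/
noncomputable def twistedClasses {G : Type*} [Group G] (φ : G →* G) : ℕ :=
  Nat.card (Quot (fun x y : G => ∃ z : G, x = z * y * (φ z)⁻¹))

/-- The Reidemeister spectrum: the set of Reidemeister numbers of automorphisms. -/
noncomputable def reidSpec (G : Type*) [Group G] : Set ℕ :=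
  {r | ∃ φ : G ≃* G, twistedClasses φ.toMonoidHom = r}

/-! If `g i = 1`, then `g` is killed by `M = ∏ j ≠ i, |G j|`, so the `i`-th coordinate of `ψ g`
is killed by both `M` and the coprime `|G i|`, hence trivial. Thus every endomorphism of
`Π i, G i` acts coordinatewise, and every automorphism is a product of automorphisms of the
factors. For a product of endomorphisms twisted conjugacy is coordinatewise, so the Reidemeister
number is the product of those of the factors. -/

section TwistedConjugacy

variable {G : Type*} [Group G]

theorem twistedConj_equivalence (φ : G →* G) :
    Equivalence fun x y : G => ∃ z : G, x = z * y * (φ z)⁻¹ where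
  refl x := ⟨1, by simp⟩
  symm := by
    rintro x y ⟨z, rfl⟩
    exact ⟨z⁻¹, by simp [mul_assoc]⟩
  trans := by
    rintro x y w ⟨z, rfl⟩ ⟨u, rfl⟩
    exact ⟨z * u, by simp [mul_assoc]⟩

def twistedSetoid (φ : G →* G) : Setoid G :=
  ⟨_, twistedConj_equivalence φ⟩

theorem twistedClasses_eq_card_quotient (φ : G →* G) :
    twistedClasses φ = Nat.card (Quotient (twistedSetoid φ)) :=
  rfl

end TwistedConjugacy

section Pi

variable {ι : Type*} {G : ι → Type*} [∀ i, Group (G i)]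

theorem twistedSetoid_piMap (φ : ∀ i, G i →* G i) :
    twistedSetoid (MonoidHom.piMap φ) = @piSetoid _ _ fun i => twistedSetoid (φ i) := by
  ext x y
  change (∃ z, x = z * y * (MonoidHom.piMap φ z)⁻¹) ↔
    ∀ i, ∃ z, x i = z * y i * (φ i z)⁻¹
  simp only [funext_iff, Pi.mul_apply, Pi.inv_apply, MonoidHom.piMap_apply]
  exact (Classical.skolem (p := fun i z => x i = z * y i * (φ i z)⁻¹)).symm

theorem twistedClasses_piMap [Fintype ι] (φ : ∀ i, G i →* G i) :
    twistedClasses (MonoidHom.piMap φ) = ∏ i, twistedClasses (φ i) := by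
  rw [twistedClasses_eq_card_quotient, twistedSetoid_piMap,
    ← Nat.card_congr (Setoid.piQuotientEquiv _), Nat.card_pi]
  rfl

theorem twistedClasses_piCongrRight [Fintype ι] (e : ∀ i, G i ≃* G i) :
    twistedClasses (MulEquiv.piCongrRight e).toMonoidHom =
      ∏ i, twistedClasses (e i).toMonoidHom :=
  twistedClasses_piMap fun i => (e i).toMonoidHom

end Pi

section CoprimeFactors

variable {ι : Type*} [Fintype ι] [DecidableEq ι] {G : ι → Type*} [∀ i, Group (G i)]

theorem pi_apply_eq_one_of_apply_eq_one
    (hcop : Pairwise fun i j => Nat.Coprime (Nat.card (G i)) (Nat.card (G j)))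
    (ψ : (∀ i, G i) →* ∀ i, G i) {g : ∀ i, G i} {i : ι} (hg : g i = 1) : ψ g i = 1 := by
  set M := ∏ j ∈ Finset.univ.erase i, Nat.card (G j)
  have hgM : g ^ M = 1 := by
    funext j
    by_cases hj : j = i
    · subst hj
      simp [hg]
    · obtain ⟨k, hk⟩ : Nat.card (G j) ∣ M :=
        Finset.dvd_prod_of_mem _ (Finset.mem_erase.mpr ⟨hj, Finset.mem_univ j⟩)
      rw [Pi.pow_apply, hk, pow_mul, pow_card_eq_one', one_pow, Pi.one_apply]
  have hcopM : Nat.Coprime M (Nat.card (G i)) :=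
    Nat.Coprime.prod_left fun j hj => hcop (Finset.mem_erase.mp hj).1
  have : ψ g i ^ M = 1 := by rw [← Pi.pow_apply, ← map_pow, hgM, map_one, Pi.one_apply]
  simpa [hcopM] using pow_gcd_eq_one.mpr ⟨this, pow_card_eq_one'⟩

theorem pi_apply_eq_apply_of_apply_eq
    (hcop : Pairwise fun i j => Nat.Coprime (Nat.card (G i)) (Nat.card (G j)))
    (ψ : (∀ i, G i) →* ∀ i, G i) {g g' : ∀ i, G i} {i : ι} (h : g i = g' i) :
    ψ g i = ψ g' i := by
  have := pi_apply_eq_one_of_apply_eq_one hcop ψ (g := g⁻¹ * g') (i := i) (by simp [h])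
  simpa [inv_mul_eq_one] using this

theorem exists_eq_piCongrRight
    (hcop : Pairwise fun i j => Nat.Coprime (Nat.card (G i)) (Nat.card (G j)))
    (ψ : (∀ i, G i) ≃* ∀ i, G i) :
    ∃ e : ∀ i, G i ≃* G i, ψ = MulEquiv.piCongrRight e := by
  have factor (φ : (∀ i, G i) ≃* ∀ i, G i) (g : ∀ i, G i) (i : ι) :
      φ g i = φ (Pi.mulSingle i (g i)) i :=
    pi_apply_eq_apply_of_apply_eq hcop φ.toMonoidHom (Pi.mulSingle_eq_same i (g i)).symm
  refine ⟨fun i =>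
    { toFun x := ψ (Pi.mulSingle i x) i
      invFun x := ψ.symm (Pi.mulSingle i x) i
      left_inv x := by simp [← factor ψ.symm (ψ (Pi.mulSingle i x)) i]
      right_inv x := by simp [← factor ψ (ψ.symm (Pi.mulSingle i x)) i]
      map_mul' x y := by simp [Pi.mulSingle_mul] }, ?_⟩
  ext g i
  exact factor ψ g i

end CoprimeFactors

theorem stmt_8_general {n : ℕ} (G : Fin n → Type*) [∀ i, Group (G i)]
    (hcop : ∀ i j, i ≠ j → Nat.Coprime (Nat.card (G i)) (Nat.card (G j))) :
    reidSpec (∀ i, G i) =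
      {r | ∃ f : Fin n → ℕ, (∀ i, f i ∈ reidSpec (G i)) ∧ r = ∏ i, f i} := by
  ext r
  constructor
  · rintro ⟨ψ, rfl⟩
    obtain ⟨e, rfl⟩ := exists_eq_piCongrRight hcop ψ
    exact ⟨fun i => twistedClasses (e i).toMonoidHom, fun i => ⟨e i, rfl⟩,
      twistedClasses_piCongrRight e⟩
  · rintro ⟨f, hf, rfl⟩
    choose e he using hf
    exact ⟨MulEquiv.piCongrRight e,
      (twistedClasses_piCongrRight e).trans (Finset.prod_congr rfl fun i _ => he i)⟩

theorem stmt_8 {n : ℕ} (G : Fin n → Type*) [∀ i, Group (G i)] [∀ i, Finite (G i)]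
    (hcop : ∀ i j, i ≠ j → Nat.Coprime (Nat.card (G i)) (Nat.card (G j))) :
    reidSpec (∀ i, G i) =
      {r | ∃ f : Fin n → ℕ, (∀ i, f i ∈ reidSpec (G i)) ∧ r = ∏ i, f i} :=
  stmt_8_general G hcop
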